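/- arXiv:math/0102086 — 3 statements merged into one kernel-verified Lean document; each statement's English description precedes it below -/
import Mathlib

section
/- Let κ < θ be regular uncountable cardinals. Consider the poset P whose conditions are bounded subsets s of {α < θ : cf(α) = κ} such that s is not stationary in sup(s) and no initial segment s ∩ β is stationary in β, ordered by end-extension (p ≤ q iff q = p ∩ sup(q)). Then P is <κ-directed closed: every directed subset of P of size less than κ has a lower bound, namely the union of its elements. -/
open Cardinal

/-- `C` is closed and unbounded in `β`: a subset of `β` that is unbounded in
`β` and closed under suprema of its bounded nonempty subsets. -/
def ClubIn (C : Set Ordinal.{0}) (β : Ordinal.{0}) : Prop :=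
  C ⊆ Set.Iio β ∧ (∀ α < β, ∃ γ ∈ C, α ≤ γ) ∧
    ∀ α < β, (C ∩ Set.Iio α).Nonempty → sSup (C ∩ Set.Iio α) ∈ C

/-- `S` is stationary in `β`: `S` meets every closed unbounded subset of `β`. -/
def StatIn (S : Set Ordinal.{0}) (β : Ordinal.{0}) : Prop :=
  ∀ C : Set Ordinal.{0}, ClubIn C β → (S ∩ C).Nonempty

/-- A condition in the poset for adding a stationary non-reflecting subset of
`θ ∩ Cof κ`: a bounded subset `s` of `{α < θ : cf α = κ}` which is not
stationary in `sup s` and no initial segment of which is stationary in its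
supremum (stationarity being a meaningful requirement at ordinals of
uncountable cofinality). -/
def NRCond (κ θ : Cardinal.{0}) (s : Set Ordinal.{0}) : Prop :=
  (∃ η < θ.ord, ∀ x ∈ s, x ≤ η) ∧
  (∀ x ∈ s, x < θ.ord ∧ x.cof = κ) ∧
  (ℵ₀ < (sSup s).cof → ¬ StatIn s (sSup s)) ∧
  ∀ β : Ordinal.{0}, ℵ₀ < β.cof → ¬ StatIn (s ∩ Set.Iio β) β

/-- `u` end-extends `s`: `s` is an initial segment of `u`. -/
def EndExt (u s : Set Ordinal.{0}) : Prop :=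
  s ⊆ u ∧ ∀ x ∈ u, x ∉ s → ∀ y ∈ s, y < x

/-!
Directed under end-extension, `D` is a chain, and its union `U` end-extends every condition;
it is bounded below `θ` by regularity of `θ`. An initial segment `U ∩ β`
is either an initial segment of a single condition, or `β` is the supremum of the `< κ`
ordinals `sup s + 1`, `s ∈ D`. In the second case the closure of these ordinals is a club
in `β` whose points are successors or have cofinality `< κ`, so it misses `U ⊆ Cof κ`.
-/

open Set Order

section Cofinality

universe u

lemma Ordinal.cof_lt_of_sSup_eq {X : Set Ordinal.{u}} {x : Ordinal.{u}} {κ : Cardinal.{u}}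
    (hX : #X < Cardinal.lift.{u + 1} κ) (hsup : sSup X = x) (hlt : ∀ y ∈ X, y < x) :
    x.cof < κ := by
  by_contra! hκ
  refine (Ordinal.sSup_lt_of_lt_cof ?_ hlt).ne hsup
  rw [← Ordinal.lift_cof]
  exact hX.trans_le (Cardinal.lift_le.mpr hκ)

lemma Cardinal.IsRegular.sSup_lt_ord {θ : Cardinal.{u}} (hθ : θ.IsRegular) {X : Set Ordinal.{u}}
    (hX : #X < Cardinal.lift.{u + 1} θ) (hlt : ∀ x ∈ X, x < θ.ord) : sSup X < θ.ord :=
  Ordinal.sSup_lt_of_lt_cof (by rwa [← Ordinal.lift_cof, hθ.cof_ord]) hlt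

lemma Cardinal.IsRegular.exists_bound_sUnion {θ : Cardinal.{u}} (hθ : θ.IsRegular)
    {D : Set (Set Ordinal.{u})} (hD : #D < Cardinal.lift.{u + 1} θ)
    (hbound : ∀ s ∈ D, ∃ η < θ.ord, ∀ x ∈ s, x ≤ η) :
    ∃ η < θ.ord, ∀ x ∈ ⋃₀ D, x ≤ η := by
  have hsup_lt : ∀ y ∈ sSup '' D, y < θ.ord := by
    rintro _ ⟨s, hs, rfl⟩
    obtain ⟨η, hη, hsη⟩ := hbound s hs
    exact (csSup_le' hsη).trans_lt hη
  refine ⟨sSup (sSup '' D), hθ.sSup_lt_ord (mk_image_le.trans_lt hD) hsup_lt, ?_⟩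
  rintro x ⟨s, hs, hxs⟩
  obtain ⟨η, -, hsη⟩ := hbound s hs
  exact (le_csSup ⟨η, hsη⟩ hxs).trans
    (le_csSup ⟨θ.ord, fun y hy => (hsup_lt y hy).le⟩ (mem_image_of_mem _ hs))

end Cofinality

section Stationary

lemma clubIn_Ioo {α β : Ordinal.{0}} (hαβ : α < β) (hβ : IsSuccLimit β) :
    ClubIn (Ioo α β) β := by
  refine ⟨fun x hx => hx.2, fun γ hγ => ?_, fun γ hγ ⟨c, hc⟩ => ?_⟩
  · exact ⟨max γ (succ α), ⟨(lt_succ α).trans_le (le_max_right _ _),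
      max_lt hγ (hβ.succ_lt hαβ)⟩, le_max_left _ _⟩
  · have hbdd : BddAbove (Ioo α β ∩ Iio γ) := ⟨γ, fun x hx => hx.2.le⟩
    exact ⟨hc.1.1.trans_le (le_csSup hbdd hc), (csSup_le' fun x hx => hx.2.le).trans_lt hγ⟩

/-- The closure in `β` of a set `E` cofinal in `β`. -/
lemma clubIn_setOf_sSup_inter_Iic_eq {E : Set Ordinal.{0}} {β : Ordinal.{0}}
    (hE : E ⊆ Iio β) (hcof : ∀ α < β, ∃ e ∈ E, α < e) :
    ClubIn {γ | γ < β ∧ sSup (E ∩ Iic γ) = γ} β := by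
  refine ⟨fun γ hγ => hγ.1, fun α hα => ?_, fun α hα hne => ⟨?_, ?_⟩⟩
  · obtain ⟨e, he, hαe⟩ := hcof α hα
    exact ⟨e, ⟨hE he, IsGreatest.csSup_eq ⟨⟨he, self_mem_Iic⟩, fun x hx => hx.2⟩⟩,
      hαe.le⟩
  · exact (csSup_le' fun x hx => hx.2.le).trans_lt hα
  · set δ := sSup ({γ | γ < β ∧ sSup (E ∩ Iic γ) = γ} ∩ Iio α)
    have hbdd : ∀ γ, BddAbove (E ∩ Iic γ) := fun γ => ⟨γ, fun x hx => hx.2⟩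
    refine le_antisymm (csSup_le' fun x hx => hx.2) (csSup_le hne fun γ hγ => ?_)
    rw [← hγ.1.2]
    exact csSup_le_csSup' (hbdd δ) (inter_subset_inter_right E
      (Iic_subset_Iic.mpr (le_csSup ⟨α, fun x hx => hx.2.le⟩ hγ)))

lemma StatIn.inter_Iio {S : Set Ordinal.{0}} {β : Ordinal.{0}} (hS : StatIn S β) :
    StatIn (S ∩ Iio β) β := fun C hC => by
  obtain ⟨x, hxS, hxC⟩ := hS C hC
  exact ⟨x, ⟨hxS, hC.1 hxC⟩, hxC⟩

lemma StatIn.exists_mem_Ioo {S : Set Ordinal.{0}} {α β : Ordinal.{0}} (hS : StatIn S β)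
    (hβ : IsSuccLimit β) (hαβ : α < β) : ∃ x ∈ S, x ∈ Ioo α β :=
  hS _ (clubIn_Ioo hαβ hβ)

/-- A point of the closure of `E` outside `E` is the supremum of the points of `E` below it. -/
lemma StatIn.exists_mem_or_cof_lt {S E : Set Ordinal.{0}} {β : Ordinal.{0}} {κ : Cardinal.{0}}
    (hS : StatIn S β) (hE : E ⊆ Iio β) (hcof : ∀ α < β, ∃ e ∈ E, α < e)
    (hEκ : #E < lift.{1} κ) : ∃ x ∈ S, x ∈ E ∨ x.cof < κ := by
  obtain ⟨x, hxS, -, hx⟩ := hS _ (clubIn_setOf_sSup_inter_Iic_eq hE hcof)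
  refine ⟨x, hxS, or_iff_not_imp_left.mpr fun hxE => ?_⟩
  have hIio : E ∩ Iic x = E ∩ Iio x := by
    ext y
    simp only [mem_inter_iff, mem_Iic, mem_Iio, and_congr_right_iff]
    exact fun hy => ⟨fun hyx => hyx.lt_of_ne (by rintro rfl; exact hxE hy), le_of_lt⟩
  exact Ordinal.cof_lt_of_sSup_eq ((mk_le_mk_of_subset inter_subset_left).trans_lt hEκ)
    (hIio ▸ hx) fun y hy => hy.2

end Stationary

section EndExtension

lemma EndExt.or_of_endExt {u s t : Set Ordinal.{0}} (hs : EndExt u s) (ht : EndExt u t) :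
    EndExt s t ∨ EndExt t s := by
  by_cases hts : t ⊆ s
  · exact Or.inl ⟨hts, fun x hxs hxt => ht.2 x (hs.1 hxs) hxt⟩
  · obtain ⟨z, hzt, hzs⟩ := not_subset.mp hts
    refine Or.inr ⟨fun y hys => ?_, fun x hxt hxs => hs.2 x (ht.1 hxt) hxs⟩
    by_contra hyt
    exact (hs.2 z (ht.1 hzt) hzs y hys).not_gt (ht.2 y (hs.1 hys) hyt z hzt)

lemma endExt_sUnion {D : Set (Set Ordinal.{0})}
    (hchain : ∀ s ∈ D, ∀ t ∈ D, EndExt s t ∨ EndExt t s) {s : Set Ordinal.{0}}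
    (hs : s ∈ D) :
    EndExt (⋃₀ D) s := by
  refine ⟨subset_sUnion_of_mem hs, ?_⟩
  rintro x ⟨t, ht, hxt⟩ hxs
  rcases hchain s hs t ht with hst | hts
  · exact absurd (hst.1 hxt) hxs
  · exact hts.2 x hxt hxs

end EndExtension

lemma NRCond.bddAbove {κ θ : Cardinal.{0}} {s : Set Ordinal.{0}} (h : NRCond κ θ s) :
    BddAbove s :=
  let ⟨η, _, hη⟩ := h.1
  ⟨η, hη⟩

lemma NRCond.not_statIn_sUnion_inter_Iio {κ θ : Cardinal.{0}} (hκ : κ ≠ 1)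
    {D : Set (Set Ordinal.{0})} (hD : ∀ s ∈ D, NRCond κ θ s)
    (hext : ∀ s ∈ D, EndExt (⋃₀ D) s) (hcard : #D < lift.{1} κ) (β : Ordinal.{0})
    (hβ : ℵ₀ < β.cof) : ¬ StatIn (⋃₀ D ∩ Iio β) β := by
  intro hstat
  have hβlim : IsSuccLimit β := Ordinal.one_lt_cof_iff.mp (one_lt_aleph0.trans hβ)
  by_cases hcover : ∃ s ∈ D, ⋃₀ D ∩ Iio β ⊆ s
  · obtain ⟨s, hs, hsub⟩ := hcover
    have heq : ⋃₀ D ∩ Iio β = s ∩ Iio β := (subset_inter hsub inter_subset_right).antisymm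
      (inter_subset_inter_left _ (subset_sUnion_of_mem hs))
    exact (hD s hs).2.2.2 β hβ (heq ▸ hstat)
  push Not at hcover
  set E := (fun s => sSup s + 1) '' D
  have hEβ : E ⊆ Iio β := by
    rintro _ ⟨s, hs, rfl⟩
    obtain ⟨x, ⟨hxU, hxβ⟩, hxs⟩ := not_subset.mp (hcover s hs)
    have hsx : sSup s ≤ x := csSup_le' fun y hy => ((hext s hs).2 x hxU hxs y hy).le
    exact hβlim.add_one_lt (hsx.trans_lt hxβ)
  have hEcof : ∀ α < β, ∃ e ∈ E, α < e := by
    intro α hα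
    obtain ⟨x, ⟨⟨s, hs, hxs⟩, -⟩, hαx, -⟩ := hstat.exists_mem_Ioo hβlim hα
    exact ⟨_, mem_image_of_mem _ hs,
      hαx.trans_le ((le_csSup (hD s hs).bddAbove hxs).trans (le_add_right le_rfl))⟩
  obtain ⟨x, ⟨⟨s, hs, hxs⟩, -⟩, hx⟩ :=
    hstat.exists_mem_or_cof_lt hEβ hEcof (mk_image_le.trans_lt hcard)
  have hxκ : x.cof = κ := ((hD s hs).2.1 x hxs).2
  rcases hx with ⟨t, -, rfl⟩ | hx
  · exact hκ (hxκ ▸ Ordinal.cof_add_one _)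
  · exact hx.ne hxκ

theorem stmt9_general (κ θ : Cardinal.{0}) (hκunc : ℵ₀ < κ)
    (hθreg : θ.IsRegular) (hκθ : κ < θ)
    (D : Set (Set Ordinal.{0}))
    (hD : ∀ s ∈ D, NRCond κ θ s)
    (hdir : ∀ s ∈ D, ∀ t ∈ D, ∃ u ∈ D, EndExt u s ∧ EndExt u t)
    (hcard : #D < Cardinal.lift.{1} κ) :
    NRCond κ θ (⋃₀ D) ∧ ∀ s ∈ D, EndExt (⋃₀ D) s := by
  have hext : ∀ s ∈ D, EndExt (⋃₀ D) s := fun s hs => endExt_sUnion (fun s hs t ht =>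
    let ⟨_, _, hus, hut⟩ := hdir s hs t ht
    hus.or_of_endExt hut) hs
  have hnr := NRCond.not_statIn_sUnion_inter_Iio (one_lt_aleph0.trans hκunc).ne' hD hext hcard
  refine ⟨⟨?_, fun x ⟨s, hs, hxs⟩ => (hD s hs).2.1 x hxs,
    fun hβ hstat => hnr _ hβ hstat.inter_Iio, hnr⟩, hext⟩
  exact hθreg.exists_bound_sUnion (hcard.trans (lift_lt.mpr hκθ)) fun s hs => (hD s hs).1

/-- For regular uncountable `κ < θ`, the poset of conditions for adding a
stationary non-reflecting subset of `θ ∩ Cof κ`, ordered by end-extension, is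
`<κ`-directed closed: any directed set `D` of conditions of size `< κ` has a
lower bound, namely the union `⋃₀ D` of its elements. -/
theorem stmt9 (κ θ : Cardinal.{0}) (hκreg : κ.IsRegular) (hκunc : ℵ₀ < κ)
    (hθreg : θ.IsRegular) (hκθ : κ < θ)
    (D : Set (Set Ordinal.{0}))
    (hD : ∀ s ∈ D, NRCond κ θ s)
    (hdir : ∀ s ∈ D, ∀ t ∈ D, ∃ u ∈ D, EndExt u s ∧ EndExt u t)
    (hcard : #D < Cardinal.lift.{1} κ) :
    NRCond κ θ (⋃₀ D) ∧ ∀ s ∈ D, EndExt (⋃₀ D) s :=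
  stmt9_general κ θ hκunc hθreg hκθ D hD hdir hcard
end

section
/- Suppose κ is a measurable cardinal, η ≥ κ is a cardinal, U is a κ-complete nonprincipal ultrafilter on κ, and the set A = {δ < κ : there exists a fine δ-complete ultrafilter on P_δ(η)} belongs to U. Then there exists a fine κ-complete ultrafilter on P_κ(η); that is, a measurable limit (in the measure-one sense) of η-strongly compact cardinals is itself η-strongly compact. -/
open Cardinal

/-- `U` is an ultrafilter on `X` (as a set of subsets of `X`). -/
def IsUltra {X : Type} (U : Set (Set X)) : Prop :=
  Set.univ ∈ U ∧ ∅ ∉ U ∧ (∀ A ∈ U, ∀ B : Set X, A ⊆ B → B ∈ U) ∧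
    (∀ A ∈ U, ∀ B ∈ U, A ∩ B ∈ U) ∧ ∀ A : Set X, A ∈ U ∨ Aᶜ ∈ U

/-- `U` is `κ`-complete: closed under intersections of fewer than `κ` of its
members. -/
def IsCompleteUF {X : Type} (κ : Cardinal.{0}) (U : Set (Set X)) : Prop :=
  ∀ s : Set (Set X), #s < κ → (∀ A ∈ s, A ∈ U) → ⋂₀ s ∈ U

/-- `P_δ(η)`: the subsets of `η` (represented by its canonical carrier type
`η.ord.toType`) of cardinality less than `δ`. -/
def Pset (δ η : Cardinal.{0}) : Type :=
  {x : Set η.ord.ToType // #x < δ}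

/-- `W` is fine: for every `a < η`, the set of `x` with `a ∈ x` belongs to `W`. -/
def IsFine {δ η : Cardinal.{0}} (W : Set (Set (Pset δ η))) : Prop :=
  ∀ a : η.ord.ToType, {x : Pset δ η | a ∈ x.1} ∈ W

/-- `δ` is `η`-strongly compact: there is a fine `δ`-complete ultrafilter on
`P_δ(η)`. -/
def SCompact (δ η : Cardinal.{0}) : Prop :=
  ∃ W : Set (Set (Pset δ η)), IsUltra W ∧ IsCompleteUF δ W ∧ IsFine W

/-- The cardinal `δ < κ` corresponding to an element of the canonical carrier
of `κ`: the cardinality of the ordinal position of `a` below `κ`. -/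
noncomputable def posCard {κ : Cardinal.{0}} (a : κ.ord.ToType) : Cardinal.{0} :=
  (@Ordinal.typein κ.ord.ToType (· < ·) isWellOrder_lt a).card

/-!
Menas' construction: a set `X ⊆ P_κ(η)` is declared large when `U`-almost every `W_δ`
contains `X ∩ P_δ(η)`. Ultrafilter properties and fineness pass through the limit
pointwise. For `κ`-completeness, given fewer than `κ` large sets, `U`-almost every `δ`
exceeds their number (Ulam's argument that such a `U` makes `κ` a limit cardinal), so there
`W_δ` contains the intersection unless it misses a member; by `κ`-completeness of `U`, a
single member would then be missed on a `U`-large set, contradicting its largeness.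
-/

open Set

namespace IsUltra

variable {X : Type} {U : Set (Set X)}

lemma univ_mem (hU : IsUltra U) : Set.univ ∈ U := hU.1

lemma empty_notMem (hU : IsUltra U) : ∅ ∉ U := hU.2.1

lemma mem_of_superset (hU : IsUltra U) {A B : Set X} (hA : A ∈ U) (h : A ⊆ B) : B ∈ U :=
  hU.2.2.1 A hA B h

lemma inter_mem (hU : IsUltra U) {A B : Set X} (hA : A ∈ U) (hB : B ∈ U) : A ∩ B ∈ U :=
  hU.2.2.2.1 A hA B hB

lemma mem_or_compl_mem (hU : IsUltra U) (A : Set X) : A ∈ U ∨ Aᶜ ∈ U := hU.2.2.2.2 A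

lemma compl_mem_of_notMem (hU : IsUltra U) {A : Set X} (h : A ∉ U) : Aᶜ ∈ U :=
  (hU.mem_or_compl_mem A).resolve_left h

lemma nonempty_of_mem (hU : IsUltra U) {A : Set X} (hA : A ∈ U) : A.Nonempty :=
  nonempty_iff_ne_empty.2 fun h => hU.empty_notMem (h ▸ hA)

end IsUltra

namespace IsCompleteUF

variable {X : Type} {κ : Cardinal.{0}} {U : Set (Set X)}

lemma mono {κ' : Cardinal.{0}} (h : κ' ≤ κ) (hUc : IsCompleteUF κ U) : IsCompleteUF κ' U :=
  fun s hs => hUc s (hs.trans_le h)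

lemma exists_mem_of_iUnion_mem (hUc : IsCompleteUF κ U) (hU : IsUltra U) {ι : Type}
    (hι : #ι < κ) {A : ι → Set X} (h : ⋃ i, A i ∈ U) : ∃ i, A i ∈ U := by
  by_contra! hA
  have hcompl : ⋂₀ range (fun i => (A i)ᶜ) ∈ U :=
    hUc _ (mk_range_le.trans_lt hι) (by rintro _ ⟨i, rfl⟩; exact hU.compl_mem_of_notMem (hA i))
  obtain ⟨x, hx, hx'⟩ := hU.nonempty_of_mem (hU.inter_mem h hcompl)
  obtain ⟨i, hi⟩ := mem_iUnion.1 hx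
  exact hx' _ ⟨i, rfl⟩ hi

lemma compl_mem_of_mk_lt (hUc : IsCompleteUF κ U) (hU : IsUltra U) (hUnp : ∀ x, {x} ∉ U)
    {C : Set X} (hC : #C < κ) : Cᶜ ∈ U := by
  refine (hU.mem_or_compl_mem C).resolve_left fun hCU => ?_
  obtain ⟨c, hc⟩ := hUc.exists_mem_of_iUnion_mem hU hC (A := fun c : C => {(c : X)})
    (by rwa [iUnion_of_singleton_coe])
  exact hUnp c hc

lemma exists_ne_setOf_eq_mem (hUc : IsCompleteUF κ U) (hU : IsUltra U) {Y M : Type}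
    (hM : #M < κ) (hY : κ ≤ #Y) (g : Y → X → M) :
    ∃ y y', y ≠ y' ∧ {a | g y a = g y' a} ∈ U := by
  have hfiber : ∀ y, ∃ m, {a | g y a = m} ∈ U := fun y =>
    hUc.exists_mem_of_iUnion_mem hU hM (hU.mem_of_superset hU.univ_mem
      fun a _ => mem_iUnion.2 ⟨g y a, rfl⟩)
  choose ξ hξ using hfiber
  obtain ⟨y, y', hξy, hne⟩ : ∃ y y', ξ y = ξ y' ∧ y ≠ y' := by
    refine Function.not_injective_iff.1 fun hinj => ?_
    exact (hY.trans (mk_le_of_injective hinj)).not_gt hM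
  exact ⟨y, y', hne, hU.mem_of_superset (hU.inter_mem (hξ y) (hξ y'))
    fun a ⟨h, h'⟩ => h.trans (hξy.trans h'.symm)⟩

end IsCompleteUF

section Position

variable {κ : Cardinal.{0}} {U : Set (Set κ.ord.ToType)}

lemma posCard_eq_mk_Iio (a : κ.ord.ToType) : posCard a = #(Iio a) := rfl

lemma posCard_lt (a : κ.ord.ToType) : posCard a < κ := by
  simpa [posCard_eq_mk_Iio] using mk_Iio_lt a (by simp)

lemma IsCompleteUF.Ioi_mem (hUc : IsCompleteUF κ U) (hκ : ℵ₀ < κ) (hU : IsUltra U)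
    (hUnp : ∀ a, {a} ∉ U) (b : κ.ord.ToType) : Ioi b ∈ U := by
  rw [← compl_Iic]
  refine hUc.compl_mem_of_mk_lt hU hUnp ?_
  calc #(Iic b) ≤ posCard b + 1 := by rw [posCard_eq_mk_Iio, ← Iio_insert]; exact mk_insert_le
    _ < κ := add_lt_of_lt hκ.le (posCard_lt b) (one_lt_aleph0.trans hκ)

/-- Otherwise almost every `a` injects its predecessors into `μ`, and the injections,
read as functions of `a`, contradict `exists_ne_setOf_eq_mem`. -/
lemma setOf_lt_posCard_mem (hκ : ℵ₀ < κ) (hU : IsUltra U) (hUc : IsCompleteUF κ U)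
    (hUnp : ∀ a, {a} ∉ U) {μ : Cardinal.{0}} (hμ : μ < κ) :
    {a : κ.ord.ToType | μ < posCard a} ∈ U := by
  refine (hU.mem_or_compl_mem _).resolve_right fun hsmall => ?_
  have hemb : ∀ a : κ.ord.ToType, ¬ μ < posCard a → Nonempty (Iio a ↪ μ.ord.ToType) :=
    fun a ha => by rw [← le_def, mk_ord_toType]; exact not_lt.1 ha
  let g : κ.ord.ToType → κ.ord.ToType → Option μ.ord.ToType := fun b a =>
    if h : b < a ∧ ¬ μ < posCard a then some ((hemb a h.2).some ⟨b, h.1⟩) else none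
  obtain ⟨b, b', hne, hgg⟩ := hUc.exists_ne_setOf_eq_mem hU
    (by rw [mk_option, mk_ord_toType]; exact add_lt_of_lt hκ.le hμ (one_lt_aleph0.trans hκ))
    (mk_ord_toType κ).ge g
  obtain ⟨a, ⟨⟨ha, hb⟩, hb'⟩, hg⟩ := hU.nonempty_of_mem <| hU.inter_mem
    (hU.inter_mem (hU.inter_mem hsmall (hUc.Ioi_mem hκ hU hUnp b)) (hUc.Ioi_mem hκ hU hUnp b'))
    hgg
  simp only [mem_ofPred_eq, g] at hg
  rw [dif_pos ⟨hb, ha⟩, dif_pos ⟨hb', ha⟩, Option.some_inj] at hg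
  exact hne (congrArg Subtype.val ((hemb a ha).some.injective hg))

end Position

section UltraLimit

variable {X Z : Type} {Y : X → Type} {U : Set (Set X)} {e : ∀ a, Y a → Z}
  {W : ∀ a, Set (Set (Y a))}

/-- Menas' `U`-limit; with `e a` the inclusion `P_δ(η) ⊆ P_κ(η)`, the pullback
`e a ⁻¹' S` is `S ∩ P_δ(η)`. -/
def ultraLimit (U : Set (Set X)) (e : ∀ a, Y a → Z) (W : ∀ a, Set (Set (Y a))) :
    Set (Set Z) :=
  {S | {a | e a ⁻¹' S ∈ W a} ∈ U}

lemma IsUltra.ultraLimit (hU : IsUltra U) (hW : {a | IsUltra (W a)} ∈ U) :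
    IsUltra (ultraLimit U e W) := by
  refine ⟨hU.mem_of_superset hW fun a ha => ha.univ_mem, fun h => ?_, fun S hS T hST => ?_,
    fun S hS T hT => ?_, fun S => (em _).imp_right fun hS => ?_⟩
  · obtain ⟨a, ha, hWa⟩ := hU.nonempty_of_mem (hU.inter_mem h hW)
    exact hWa.empty_notMem ha
  · exact hU.mem_of_superset (hU.inter_mem hS hW) fun a ⟨ha, hWa⟩ =>
      hWa.mem_of_superset ha (preimage_mono hST)
  · exact hU.mem_of_superset (hU.inter_mem (hU.inter_mem hS hT) hW)
      fun a ⟨⟨ha, ha'⟩, hWa⟩ => hWa.inter_mem ha ha'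
  · exact hU.mem_of_superset (hU.inter_mem (hU.compl_mem_of_notMem hS) hW) fun a ⟨ha, hWa⟩ =>
      hWa.compl_mem_of_notMem ha

lemma IsCompleteUF.ultraLimit {κ : Cardinal.{0}} (hU : IsUltra U) (hUc : IsCompleteUF κ U)
    (hW : ∀ μ < κ, {a | IsCompleteUF (Order.succ μ) (W a)} ∈ U) :
    IsCompleteUF κ (ultraLimit U e W) := by
  intro s hs hsW
  by_contra hbad
  have hcover : ⋃ S : s, {a | e a ⁻¹' S ∉ W a} ∈ U := by
    refine hU.mem_of_superset (hU.inter_mem (hU.compl_mem_of_notMem hbad) (hW _ hs))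
      fun a ⟨ha, hWa⟩ => mem_iUnion.2 ?_
    by_contra! hgood
    refine ha ?_
    rw [mem_ofPred_eq, preimage_sInter, ← sInter_image]
    exact hWa _ (mk_image_le.trans_lt (Order.lt_succ _))
      (by rintro _ ⟨S, hS, rfl⟩; exact not_not.1 (hgood ⟨S, hS⟩))
  obtain ⟨S, hS⟩ := hUc.exists_mem_of_iUnion_mem hU hs hcover
  obtain ⟨a, hmiss, hhit⟩ := hU.nonempty_of_mem (hU.inter_mem hS (hsW S S.2))
  exact hmiss hhit

end UltraLimit

def Pset.inclusion {δ δ' η : Cardinal.{0}} (h : δ ≤ δ') : Pset δ η → Pset δ' η :=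
  fun x => ⟨x.1, x.2.trans_le h⟩

theorem stmt11_general (κ η : Cardinal.{0}) (hκ : ℵ₀ < κ)
    (U : Set (Set κ.ord.ToType)) (hU : IsUltra U) (hUc : IsCompleteUF κ U)
    (hUnp : ∀ a : κ.ord.ToType, {a} ∉ U)
    (hA : {a : κ.ord.ToType | SCompact (posCard a) η} ∈ U) :
    SCompact κ η := by
  let W (a : κ.ord.ToType) := Classical.epsilon fun W : Set (Set (Pset (posCard a) η)) =>
    IsUltra W ∧ IsCompleteUF (posCard a) W ∧ IsFine W
  have hW : ∀ a, SCompact (posCard a) η →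
      IsUltra (W a) ∧ IsCompleteUF (posCard a) (W a) ∧ IsFine (W a) :=
    fun a ha => Classical.epsilon_spec ha
  refine ⟨ultraLimit U (fun a => Pset.inclusion (posCard_lt a).le) W,
    hU.ultraLimit (hU.mem_of_superset hA fun a ha => (hW a ha).1),
    hUc.ultraLimit hU fun μ hμ => ?_,
    fun b => hU.mem_of_superset hA fun a ha => (hW a ha).2.2 b⟩
  exact hU.mem_of_superset (hU.inter_mem hA (setOf_lt_posCard_mem hκ hU hUc hUnp hμ))
    fun a ⟨ha, hμa⟩ => (hW a ha).2.1.mono (Order.succ_le_of_lt hμa)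

/-- Menas: if `κ` is measurable, `η ≥ κ`, `U` is a `κ`-complete nonprincipal
ultrafilter on `κ`, and `U`-almost every `δ < κ` is `η`-strongly compact, then
`κ` is `η`-strongly compact. -/
theorem stmt11 (κ η : Cardinal.{0}) (hκ : ℵ₀ < κ) (hη : κ ≤ η)
    (U : Set (Set κ.ord.ToType)) (hU : IsUltra U) (hUc : IsCompleteUF κ U)
    (hUnp : ∀ a : κ.ord.ToType, {a} ∉ U)
    (hA : {a : κ.ord.ToType | SCompact (posCard a) η} ∈ U) :
    SCompact κ η :=
  stmt11_general κ η hκ U hU hUc hUnp hA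
end

section
/- Let κ be a regular uncountable cardinal and let η > κ be a singular cardinal with cf(η) ≥ κ. Suppose that κ is <η-strongly compact, i.e., for every cardinal β with κ ≤ β < η there is a fine κ-complete ultrafilter on P_κ(β), and suppose additionally there is a fine κ-complete ultrafilter on P_κ(cf(η)). Then κ is η-strongly compact: there is a fine κ-complete ultrafilter on P_κ(η). -/
open Cardinal

/-!
Fix a cofinal family `⟨c i : i < cf η⟩` in `η`. Each `s ∈ P_κ(cf η)` has fewer than `κ ≤ cf η`
elements, so `{c i | i ∈ s}` is bounded by some `b s < η`, and the initial segment below `b s`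
has size `< η`. Pushing a fine `κ`-complete ultrafilter on `P_κ(β)`, for a suitable `β < η`,
forward to `P_κ(η)` gives a `κ`-complete ultrafilter `U s` fine on that segment. The sum of the
`U s` along the fine ultrafilter on `P_κ(cf η)` is fine: every `a < η` lies below some `c i`,
hence below `b s` for all `s ∋ i`.
-/

open Set

section Ultrafilters

variable {X Y S : Type} {κ : Cardinal.{0}}

def ufMap (f : X → Y) (U : Set (Set X)) : Set (Set Y) :=
  {B | f ⁻¹' B ∈ U}

def ufSum (V : Set (Set S)) (U : S → Set (Set Y)) : Set (Set Y) :=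
  {B | {s | B ∈ U s} ∈ V}

theorem IsUltra.mem_of_superset_s12 {U : Set (Set X)} (hU : IsUltra U) {A B : Set X}
    (hA : A ∈ U) (hAB : A ⊆ B) : B ∈ U :=
  hU.2.2.1 A hA B hAB

theorem IsUltra.ufMap {U : Set (Set X)} (hU : IsUltra U) (f : X → Y) :
    IsUltra (ufMap f U) := by
  obtain ⟨huniv, hempty, hmono, hinter, hcompl⟩ := hU
  refine ⟨huniv, hempty, fun A hA B hAB => hmono _ hA _ (preimage_mono hAB),
    fun A hA B hB => hinter _ hA _ hB, fun A => hcompl (f ⁻¹' A)⟩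

theorem IsCompleteUF.ufMap {U : Set (Set X)} (hU : IsCompleteUF κ U) (f : X → Y) :
    IsCompleteUF κ (ufMap f U) := by
  intro 𝒮 h𝒮 hmem
  show f ⁻¹' ⋂₀ 𝒮 ∈ U
  rw [preimage_sInter, ← sInter_image]
  exact hU _ (mk_image_le.trans_lt h𝒮) (forall_mem_image.2 hmem)

theorem IsUltra.ufSum {V : Set (Set S)} (hV : IsUltra V) {U : S → Set (Set Y)}
    (hU : ∀ s, IsUltra (U s)) : IsUltra (ufSum V U) := by
  obtain ⟨huniv, hempty, hmono, hinter, hcompl⟩ := hV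
  refine ⟨?_, ?_, ?_, ?_, ?_⟩
  · simpa [_root_.ufSum, (hU _).1] using huniv
  · simpa [_root_.ufSum, (hU _).2.1] using hempty
  · exact fun A hA B hAB => hmono _ hA _ fun s hs => (hU s).mem_of_superset_s12 hs hAB
  · exact fun A hA B hB => hmono _ (hinter _ hA _ hB) _ fun s hs => (hU s).2.2.2.1 A hs.1 B hs.2
  · intro A
    refine (hcompl {s | A ∈ U s}).imp_right fun h => hmono _ h _ fun s hs => ?_
    exact ((hU s).2.2.2.2 A).resolve_left hs

theorem IsCompleteUF.ufSum {V : Set (Set S)} (hV : IsUltra V) (hVc : IsCompleteUF κ V)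
    {U : S → Set (Set Y)} (hU : ∀ s, IsCompleteUF κ (U s)) : IsCompleteUF κ (ufSum V U) := by
  intro 𝒮 h𝒮 hmem
  refine hV.mem_of_superset_s12 (hVc _ (mk_image_le.trans_lt h𝒮) (forall_mem_image.2 hmem)) ?_
  exact fun s hs => hU s 𝒮 h𝒮 fun A hA => hs _ ⟨A, hA, rfl⟩

end Ultrafilters

def IsFineOn {κ η : Cardinal.{0}} (T : Set η.ord.ToType) (U : Set (Set (Pset κ η))) : Prop :=
  ∀ a ∈ T, {x : Pset κ η | a ∈ x.1} ∈ U

def Pset.image {κ β η : Cardinal.{0}} (e : β.ord.ToType → η.ord.ToType) (z : Pset κ β) :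
    Pset κ η :=
  ⟨e '' z.1, mk_image_le.trans_lt z.2⟩

-- Push a fine ultrafilter on `P_κ(β)` forward along a map `β → η` whose range covers `T`.
theorem SCompact.exists_isFineOn {κ β η : Cardinal.{0}} (h : SCompact κ β) (hη : η ≠ 0)
    {T : Set η.ord.ToType} (hT : #T ≤ β) :
    ∃ U : Set (Set (Pset κ η)), IsUltra U ∧ IsCompleteUF κ U ∧ IsFineOn T U := by
  obtain ⟨W, hWu, hWc, hWf⟩ := h
  have : Nonempty η.ord.ToType := nonempty_ord_toType hη
  obtain ⟨ι⟩ : Nonempty (T ↪ β.ord.ToType) := by rwa [← le_def, mk_ord_toType]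
  let e := Function.extend ι Subtype.val fun _ => Classical.arbitrary _
  refine ⟨ufMap (Pset.image e) W, hWu.ufMap _, hWc.ufMap _, fun a ha => ?_⟩
  refine hWu.mem_of_superset_s12 (hWf (ι ⟨a, ha⟩)) fun z hz => ⟨_, hz, ?_⟩
  exact ι.injective.extend_apply _ _ _

theorem sCompact_of_ufSum {κ η : Cardinal.{0}} {S : Type} {V : Set (Set S)} (hV : IsUltra V)
    (hVc : IsCompleteUF κ V) (T : S → Set η.ord.ToType) (hT : ∀ a, {s | a ∈ T s} ∈ V)
    (hU : ∀ s, ∃ U : Set (Set (Pset κ η)), IsUltra U ∧ IsCompleteUF κ U ∧ IsFineOn (T s) U) :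
    SCompact κ η := by
  choose U hUu hUc hUf using hU
  exact ⟨ufSum V U, hV.ufSum hUu, hVc.ufSum hV hUc,
    fun a => hV.mem_of_superset_s12 (hT a) fun s hs => hUf s a hs⟩

theorem Ordinal.exists_isCofinal_range_toType (o : Ordinal) :
    ∃ f : o.cof.ord.ToType → o.ToType, IsCofinal (range f) := by
  obtain ⟨s, hs, hcard⟩ := Order.exists_cof_eq o.ToType
  obtain ⟨e⟩ : Nonempty (o.cof.ord.ToType ≃ s) := by
    rw [← Cardinal.eq, mk_ord_toType, hcard, cof_toType]
  exact ⟨Subtype.val ∘ e, by rwa [range_comp, e.range_eq_univ, image_univ, Subtype.range_coe]⟩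

theorem exists_forall_lt_of_mk_lt_cof {α : Type*} [LinearOrder α] {A : Set α}
    (hA : #A < Order.cof α) : ∃ x, ∀ y ∈ A, y < x :=
  not_isCofinal_iff.1 fun h => (Order.cof_le h).not_gt hA

theorem stmt12_general (κ η : Cardinal.{0}) (hκη : κ < η) (hcof : κ ≤ η.ord.cof)
    (hlt : ∀ β : Cardinal.{0}, κ ≤ β → β < η → SCompact κ β)
    (hcofsc : SCompact κ η.ord.cof) :
    SCompact κ η := by
  obtain ⟨V, hVu, hVc, hVf⟩ := hcofsc
  obtain ⟨c, hc⟩ := Ordinal.exists_isCofinal_range_toType η.ord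
  have hbound (s : Pset κ η.ord.cof) : ∃ b, ∀ a ∈ c '' s.1, a < b := by
    refine exists_forall_lt_of_mk_lt_cof ?_
    rw [Ordinal.cof_toType]
    exact mk_image_le.trans_lt (s.2.trans_le hcof)
  choose b hb using hbound
  refine sCompact_of_ufSum hVu hVc (fun s => Iio (b s)) (fun a => ?_) fun s => ?_
  · obtain ⟨_, ⟨i, rfl⟩, hai⟩ := hc a
    exact hVu.mem_of_superset_s12 (hVf i) fun s hs => hai.trans_lt (hb s _ (mem_image_of_mem c hs))
  · have hIio : #(Iio (b s)) < η := by simpa using mk_Iio_lt (b s)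
    exact (hlt _ (le_max_left _ _) (max_lt hκη hIio)).exists_isFineOn hκη.ne_bot (le_max_right _ _)

/-- If `κ` is regular uncountable, `η > κ` is a singular cardinal with
`cf(η) ≥ κ`, `κ` is `<η`-strongly compact (i.e. `β`-strongly compact for every
cardinal `β` with `κ ≤ β < η`), and moreover there is a fine `κ`-complete
ultrafilter on `P_κ(cf(η))`, then `κ` is `η`-strongly compact. -/
theorem stmt12 (κ η : Cardinal.{0}) (hreg : κ.IsRegular) (hunc : ℵ₀ < κ)
    (hκη : κ < η) (hsing : η.ord.cof < η) (hcof : κ ≤ η.ord.cof)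
    (hlt : ∀ β : Cardinal.{0}, κ ≤ β → β < η → SCompact κ β)
    (hcofsc : SCompact κ η.ord.cof) :
    SCompact κ η :=
  stmt12_general κ η hκη hcof hlt hcofsc
end
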